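/- arXiv:1212.5477 — 2 statements merged into one kernel-verified Lean document; each statement's English description precedes it below -/
import Mathlib

section
/- Let (A, m, k) be a one-dimensional local Noetherian domain that is not regular. Then every A-linear map f : m → A factors through the inclusion m ⊆ A; that is, the natural map Hom_A(m, m) → Hom_A(m, A) induced by m ⊆ A is an isomorphism of A-modules. -/
open IsLocalRing

/-- Let `(A, m, k)` be a one-dimensional local Noetherian domain that is
not regular (equivalently, whose maximal ideal is not principal).  Then every `A`-linear map
`f : m → A` factors through the inclusion `m ⊆ A`; that is, the natural map
`Hom_A(m, m) → Hom_A(m, A)` induced by `m ⊆ A` is an isomorphism of `A`-modules. -/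
theorem hom_m_m_equiv_hom_m_A
    (A : Type) [CommRing A] [IsLocalRing A] [IsNoetherianRing A] [IsDomain A]
    (hdim : ringKrullDim A = 1)
    (hreg : ¬ (maximalIdeal A).IsPrincipal) :
    Function.Bijective
      (fun g : (maximalIdeal A →ₗ[A] maximalIdeal A) =>
        ((maximalIdeal A).subtype ∘ₗ g : maximalIdeal A →ₗ[A] A)) := by
  constructor
  · intro g₁ g₂ h
    ext x
    have := LinearMap.congr_fun h x
    exact this
  · intro f
    by_cases hc : ∀ y : maximalIdeal A, f y ∈ maximalIdeal A
    · exact ⟨LinearMap.codRestrict (maximalIdeal A) f hc,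
        LinearMap.subtype_comp_codRestrict f (maximalIdeal A) hc⟩
    · push_neg at hc
      obtain ⟨y, hy⟩ := hc
      have hu : IsUnit (f y) := by
        by_contra h
        exact hy ((IsLocalRing.mem_maximalIdeal _).2 h)
      obtain ⟨u, hu⟩ := hu
      exfalso
      apply hreg
      refine ⟨(y : A), ?_⟩
      apply le_antisymm
      · intro z hz
        have key : z * f y = (y : A) * f ⟨z, hz⟩ := by
          have h1 : f (z • y) = z * f y := f.map_smul z y
          have h2 : f ((y : A) • (⟨z, hz⟩ : maximalIdeal A)) = (y : A) * f ⟨z, hz⟩ :=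
            f.map_smul (y : A) ⟨z, hz⟩
          have h3 : z • y = (y : A) • (⟨z, hz⟩ : maximalIdeal A) := by
            ext
            simp [mul_comm]
          rw [← h1, ← h2, h3]
        have : z = ((↑u⁻¹ : A) * f ⟨z, hz⟩) * (y : A) := by
          have := congrArg (fun t => (↑u⁻¹ : A) * t) key
          calc z = (↑u⁻¹ : A) * (z * f y) := by
                rw [← hu]
                rw [mul_comm z, ← mul_assoc, Units.inv_mul, one_mul]
            _ = (↑u⁻¹ : A) * ((y : A) * f ⟨z, hz⟩) := by rw [key]
            _ = ((↑u⁻¹ : A) * f ⟨z, hz⟩) * (y : A) := by ring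
        rw [this]
        exact Ideal.mem_span_singleton'.2 ⟨_, rfl⟩
      · rw [Submodule.span_singleton_le_iff_mem]
        exact y.2
end

section
/- Let (A, m, k) be a one-dimensional local Noetherian domain that is not regular, and let Ā denote the integral closure of A in its field of fractions. Assume Ā is a finite A-module. Then dim_k Ext^1_A(k, A) ≤ length_A(Ā/A). In other words, the Cohen-Macaulay type of A is at most the delta-invariant of A. -/
set_option synthInstance.maxHeartbeats 1000000
set_option maxHeartbeats 1000000

open CategoryTheory IsLocalRing

/-- The length of a module, expressed as the Krull dimension (longest chain length) of its
lattice of submodules. -/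
noncomputable def moduleLength (R M : Type) [CommRing R] [AddCommGroup M] [Module R M] :
    WithBot ℕ∞ :=
  Order.krullDim (Submodule R M)

/-!
Resolve the residue field as `⋯ → P₁ → A → k`. A degree-one cocycle `ψ : P₁ → A` kills the
kernel of `d : P₁ ↠ m`, so over a domain it is multiplication by the single fraction
`q = ψ(w) / d(w)`, and `q • m ⊆ A`. If `q • m ⊆ m`, the determinant trick makes `q` integral;
otherwise `q x` is a unit for some `x ∈ m`, and then `m = (x)`, contradicting non-regularity.
The coboundaries are exactly the cocycles with `q ∈ A`, so `ψ ↦ q` embeds `Ext¹(k, A)` into `Ā / A`.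
-/

open Limits

namespace CategoryTheory.ProjectiveResolution

section OfEpi

variable {R : Type*} [Ring R] {P X : ModuleCat R} (π : P ⟶ X)

/-- Unlike `ProjectiveResolution.of`, this starts with the given epimorphism `π`, so that the
degree-zero term can be chosen to be `A` itself. -/
noncomputable def ofEpiComplex : ChainComplex (ModuleCat R) ℕ :=
  ChainComplex.mk' P (Projective.syzygies π) (Projective.d π)
    (fun f => ⟨_, Projective.d f, by erw [Category.assoc, kernel.condition, comp_zero]⟩)

theorem ofEpiComplex_d_1_0 : (ofEpiComplex π).d 1 0 = Projective.d π := by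
  simp [ofEpiComplex]

theorem ofEpiComplex_exactAt_succ (n : ℕ) : (ofEpiComplex π).ExactAt (n + 1) := by
  rw [HomologicalComplex.exactAt_iff' _ (n + 1 + 1) (n + 1) n (by simp) (by simp)]
  dsimp [HomologicalComplex.sc', HomologicalComplex.shortComplexFunctor', ofEpiComplex,
    ChainComplex.mk', ChainComplex.mk]
  simp only [ChainComplex.of.d]
  match n with
  | 0 => apply exact_d_f
  | n + 1 => apply exact_d_f

variable [Projective P] [Epi π]

instance (n : ℕ) : Projective ((ofEpiComplex π).X n) := by
  obtain (_ | _ | _ | n) := n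
  · exact ‹Projective P›
  all_goals apply Projective.projective_over

noncomputable def ofEpi : ProjectiveResolution X where
  complex := ofEpiComplex π
  π := (ChainComplex.toSingle₀Equiv _ _).symm ⟨π, by
    erw [ofEpiComplex_d_1_0, Category.assoc, kernel.condition, comp_zero]⟩
  quasiIso := ⟨fun n => by
    cases n
    · rw [ChainComplex.quasiIsoAt₀_iff, ShortComplex.quasiIso_iff_of_zeros']
      · refine (ShortComplex.exact_and_epi_g_iff_of_iso ?_).2
          ⟨exact_d_f π, by dsimp; infer_instance⟩
        exact ShortComplex.isoMk (Iso.refl _) (Iso.refl _) (Iso.refl _)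
          (by simp [ofEpiComplex]; rfl) (by simp; rfl)
      all_goals rfl
    · rw [quasiIsoAt_iff_exactAt']
      · apply ofEpiComplex_exactAt_succ
      · apply ChainComplex.exactAt_succ_single_obj⟩

theorem range_ofEpi_d_one_zero :
    LinearMap.range ((ofEpi π).complex.d 1 0).hom = LinearMap.ker π.hom := by
  erw [ofEpiComplex_d_1_0]
  exact (exact_d_f π).moduleCat_range_eq_ker

end OfEpi

noncomputable def isoExtSuccHomology {C : Type*} [Category C] [Abelian C] [EnoughProjectives C]
    {R : Type*} [Ring R] [Linear R C] {X : C} (Q : ProjectiveResolution X) (Y : C) (n : ℕ) :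
    ((Ext R C (n + 1)).obj (Opposite.op X)).obj Y ≅
      ((Q.complex.linearYonedaObj R Y).sc' n (n + 1) (n + 2)).moduleCatLeftHomologyData.H :=
  Q.isoExt (n + 1) Y ≪≫
    ShortComplex.homologyMapIso ((Q.complex.linearYonedaObj R Y).isoSc' n (n + 1) (n + 2)
      (by simp) (by simp)) ≪≫
    ShortComplex.moduleCatHomologyIso _

end CategoryTheory.ProjectiveResolution

theorem moduleLength_eq_of_linearEquiv {R M N : Type} [CommRing R] [AddCommGroup M]
    [AddCommGroup N] [Module R M] [Module R N] (e : M ≃ₗ[R] N) :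
    moduleLength R M = moduleLength R N :=
  Order.krullDim_eq_of_orderIso (Submodule.orderIsoMapComap e)

theorem moduleLength_le_of_injective {R M N : Type} [CommRing R] [AddCommGroup M]
    [AddCommGroup N] [Module R M] [Module R N] {f : M →ₗ[R] N} (hf : Function.Injective f) :
    moduleLength R M ≤ moduleLength R N :=
  Order.krullDim_le_of_strictMono (Submodule.map f) (Submodule.map_strictMono_of_injective hf)

theorem moduleLength_quotient_le_of_comap_eq {R M N : Type} [CommRing R] [AddCommGroup M]
    [AddCommGroup N] [Module R M] [Module R N] (f : M →ₗ[R] N) {p : Submodule R M}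
    {q : Submodule R N} (h : q.comap f = p) :
    moduleLength R (M ⧸ p) ≤ moduleLength R (N ⧸ q) := by
  refine moduleLength_le_of_injective (f := p.mapQ q f h.ge) ?_
  rw [← LinearMap.ker_eq_bot, Submodule.ker_mapQ, h, Submodule.mkQ_map_self]

section Fraction

variable {A K M : Type*} [CommRing A] [Field K] [Algebra A K] [IsFractionRing A K]
  [AddCommGroup M] [Module A M]

theorem LinearMap.algebraMap_mul_div_eq_of_ker_le {d ψ : M →ₗ[A] A} (h : ker d ≤ ker ψ)
    {w : M} (hw : d w ≠ 0) (u : M) :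
    algebraMap A K (d u) * (algebraMap A K (ψ w) / algebraMap A K (d w)) =
      algebraMap A K (ψ u) := by
  have hker : d w • u - d u • w ∈ ker d := by
    simp only [mem_ker, map_sub, map_smul, smul_eq_mul]
    ring
  have hψ : d w * ψ u = d u * ψ w := by
    simpa [sub_eq_zero] using h hker
  have hw' : algebraMap A K (d w) ≠ 0 := by
    simpa using hw
  field_simp
  rw [← map_mul, ← map_mul, hψ]

theorem LinearMap.eq_smul_of_div_eq_algebraMap {d ψ : M →ₗ[A] A} (h : ker d ≤ ker ψ)
    {w : M} (hw : d w ≠ 0) {c : A}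
    (hc : algebraMap A K (ψ w) / algebraMap A K (d w) = algebraMap A K c) : ψ = c • d := by
  ext u
  apply IsFractionRing.injective A K
  rw [← algebraMap_mul_div_eq_of_ker_le h hw u, hc, smul_apply, smul_eq_mul, map_mul, mul_comm]

theorem LinearMap.algebraMap_apply_div_eq_apply_one (t : A →ₗ[A] A) {a : A} (ha : a ≠ 0) :
    algebraMap A K (t a) / algebraMap A K a = algebraMap A K (t 1) := by
  have ha' : algebraMap A K a ≠ 0 := by
    simpa using ha
  rw [div_eq_iff ha', ← map_mul, mul_comm, ← smul_eq_mul, ← map_smul, smul_eq_mul, mul_one]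

end Fraction

theorem isIntegral_of_mul_maximalIdeal_le {A K : Type*} [CommRing A] [IsLocalRing A]
    [IsNoetherianRing A] [Field K] [Algebra A K] [IsFractionRing A K]
    (hreg : ¬ (maximalIdeal A).IsPrincipal) {q : K}
    (hq : ∀ x ∈ maximalIdeal A, ∃ y : A, algebraMap A K y = algebraMap A K x * q) :
    IsIntegral A q := by
  by_cases hmq : ∀ x ∈ maximalIdeal A, ∃ y ∈ maximalIdeal A,
      algebraMap A K y = algebraMap A K x * q
  · have hm : maximalIdeal A ≠ ⊥ := fun h => hreg (h ▸ bot_isPrincipal)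
    obtain ⟨a, ha, ha0⟩ := (Submodule.ne_bot_iff _).mp hm
    refine isIntegral_of_smul_mem_submodule
      (Submodule.map (Algebra.linearMap A K) (maximalIdeal A)) ?_
      (IsNoetherian.noetherian _ |>.map _) q ?_
    · exact (Submodule.ne_bot_iff _).mpr ⟨_, ⟨a, ha, rfl⟩,
        (map_ne_zero_iff _ (IsFractionRing.injective A K)).mpr ha0⟩
    · rintro _ ⟨x, hx, rfl⟩
      obtain ⟨y, hy, hyx⟩ := hmq x hx
      exact ⟨y, hy, by simpa [mul_comm] using hyx⟩
  · exfalso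
    push Not at hmq
    obtain ⟨x, hx, hxq⟩ := hmq
    obtain ⟨y, hy⟩ := hq x hx
    have hyu : IsUnit y := by
      by_contra hy'
      exact hxq y ((mem_maximalIdeal y).mpr hy') hy
    refine hreg ⟨⟨x, le_antisymm (fun z hz => ?_) ((Ideal.span_singleton_le_iff_mem _).mpr hx)⟩⟩
    obtain ⟨t, ht⟩ := hq z hz
    have hzy : z * y = x * t := IsFractionRing.injective A K (by
      rw [map_mul, map_mul, hy, ht]; ring)
    exact Ideal.mem_span_singleton'.mpr ⟨t * hyu.unit⁻¹, by
      rw [← hyu.mul_left_inj]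
      linear_combination t * x * hyu.val_inv_mul - hzy⟩

theorem LinearMap.div_mem_integralClosure_of_ker_le {A K M : Type*} [CommRing A] [IsLocalRing A]
    [IsNoetherianRing A] [Field K] [Algebra A K] [IsFractionRing A K] [AddCommGroup M]
    [Module A M] (hreg : ¬ (maximalIdeal A).IsPrincipal) {d ψ : M →ₗ[A] A}
    (hd : range d = maximalIdeal A) (h : ker d ≤ ker ψ) {w : M} (hw : d w ≠ 0) :
    algebraMap A K (ψ w) / algebraMap A K (d w) ∈ integralClosure A K := by
  refine isIntegral_of_mul_maximalIdeal_le hreg fun x hx => ?_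
  obtain ⟨u, rfl⟩ : x ∈ range d := hd ▸ hx
  exact ⟨ψ u, (algebraMap_mul_div_eq_of_ker_le h hw u).symm⟩

namespace IsLocalRing

variable (A : Type) [CommRing A] [IsLocalRing A]

instance : Epi (ModuleCat.ofHom (Algebra.linearMap A (ResidueField A))) :=
  (ModuleCat.epi_iff_surjective _).mpr residue_surjective

noncomputable abbrev residueFieldResolution :
    ProjectiveResolution (ModuleCat.of A (ResidueField A)) :=
  ProjectiveResolution.ofEpi (ModuleCat.ofHom (Algebra.linearMap A (ResidueField A)))

noncomputable def syzygyMap : (residueFieldResolution A).complex.X 1 →ₗ[A] A :=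
  ((residueFieldResolution A).complex.d 1 0).hom

theorem range_syzygyMap : LinearMap.range (syzygyMap A) = maximalIdeal A := by
  ext x
  change x ∈ LinearMap.range ((residueFieldResolution A).complex.d 1 0).hom ↔ _
  rw [ProjectiveResolution.range_ofEpi_d_one_zero]
  exact residue_eq_zero_iff x

variable {A} in
theorem ker_syzygyMap_le_ker {ψ : (residueFieldResolution A).complex.X 1 ⟶ ModuleCat.of A A}
    (hψ : (residueFieldResolution A).complex.d 2 1 ≫ ψ = 0) :
    LinearMap.ker (syzygyMap A) ≤ LinearMap.ker ψ.hom := by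
  intro z hz
  obtain ⟨v, rfl⟩ : z ∈ LinearMap.range ((residueFieldResolution A).complex.d 2 1).hom :=
    ((residueFieldResolution A).exact_succ 0).moduleCat_range_eq_ker ▸ hz
  exact LinearMap.congr_fun (ModuleCat.hom_ext_iff.mp hψ) v

noncomputable abbrev residueFieldHomComplex : ShortComplex (ModuleCat A) :=
  ((residueFieldResolution A).complex.linearYonedaObj A (ModuleCat.of A A)).sc' 0 1 2

variable {A} [IsNoetherianRing A] (K : Type) [Field K] [Algebra A K] [IsFractionRing A K]
  (hreg : ¬ (maximalIdeal A).IsPrincipal) {w : (residueFieldResolution A).complex.X 1}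
  (hw : syzygyMap A w ≠ 0)

noncomputable def cyclesToIntegralClosure :
    LinearMap.ker (residueFieldHomComplex A).g.hom →ₗ[A] integralClosure A K where
  toFun ψ := ⟨algebraMap A K (ψ.1.hom w) / algebraMap A K (syzygyMap A w),
    (syzygyMap A).div_mem_integralClosure_of_ker_le hreg (range_syzygyMap A)
      (ker_syzygyMap_le_ker ψ.2) hw⟩
  map_add' ψ₁ ψ₂ := Subtype.ext <| by
    change algebraMap A K ((ψ₁.1.hom + ψ₂.1.hom) w) / _ = _
    simp [add_div]
  map_smul' c ψ := Subtype.ext <| by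
    change algebraMap A K ((c • ψ.1.hom) w) / _ = _
    simp [Algebra.smul_def, mul_div_assoc]

theorem comap_cyclesToIntegralClosure_range_algebraMap :
    (LinearMap.range (Algebra.linearMap A (integralClosure A K))).comap
        (cyclesToIntegralClosure K hreg hw) =
      LinearMap.range (residueFieldHomComplex A).moduleCatToCycles := by
  ext ψ
  constructor
  · rintro ⟨c, hc⟩
    have hψ : ψ.1.hom = c • syzygyMap A :=
      LinearMap.eq_smul_of_div_eq_algebraMap (K := K) (ker_syzygyMap_le_ker ψ.2) hw
        (congrArg Subtype.val hc).symm
    refine ⟨ModuleCat.ofHom (c • LinearMap.id), Subtype.ext (ModuleCat.hom_ext ?_)⟩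
    rw [hψ]
    rfl
  · rintro ⟨θ, rfl⟩
    exact ⟨θ.hom (1 : A), Subtype.ext (LinearMap.algebraMap_apply_div_eq_apply_one θ.hom hw).symm⟩

end IsLocalRing

theorem type_le_delta_general
    (A : Type) [CommRing A] [IsLocalRing A] [IsNoetherianRing A] [IsDomain A]
    (hreg : ¬ (maximalIdeal A).IsPrincipal) :
    moduleLength A (((Ext A (ModuleCat A) 1).obj
        (Opposite.op (ModuleCat.of A (ResidueField A)))).obj (ModuleCat.of A A)) ≤
      moduleLength A
        ((integralClosure A (FractionRing A)) ⧸
          (LinearMap.range (Algebra.linearMap A (integralClosure A (FractionRing A))))) := by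
  obtain ⟨w, hw⟩ : ∃ w, syzygyMap A w ≠ 0 := by
    by_contra! h
    rw [← range_syzygyMap, LinearMap.range_eq_bot.mpr (LinearMap.ext h)] at hreg
    exact hreg bot_isPrincipal
  calc _ = moduleLength A (residueFieldHomComplex A).moduleCatLeftHomologyData.H :=
        moduleLength_eq_of_linearEquiv
          ((residueFieldResolution A).isoExtSuccHomology (ModuleCat.of A A) 0).toLinearEquiv
    _ ≤ _ := moduleLength_quotient_le_of_comap_eq _
        (comap_cyclesToIntegralClosure_range_algebraMap (FractionRing A) hreg hw)

/-- Let `(A, m, k)` be a one-dimensional local Noetherian domain that is not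
regular, and let `Ā` denote the integral closure of `A` in its field of fractions; assume `Ā`
is a finite `A`-module.  Then `dim_k Ext¹_A(k, A) ≤ length_A (Ā/A)`, i.e. the Cohen-Macaulay
type of `A` is at most the delta-invariant of `A`.  (Since `Ext¹_A(k, A)` is annihilated by
`m`, its `k`-dimension coincides with its length as an `A`-module.) -/
theorem type_le_delta
    (A : Type) [CommRing A] [IsLocalRing A] [IsNoetherianRing A] [IsDomain A]
    (hdim : ringKrullDim A = 1)
    (hreg : ¬ (maximalIdeal A).IsPrincipal)
    [Module.Finite A (integralClosure A (FractionRing A))] :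
    moduleLength A (((Ext A (ModuleCat A) 1).obj
        (Opposite.op (ModuleCat.of A (ResidueField A)))).obj (ModuleCat.of A A)) ≤
      moduleLength A
        ((integralClosure A (FractionRing A)) ⧸
          (LinearMap.range (Algebra.linearMap A (integralClosure A (FractionRing A))))) :=
  type_le_delta_general A hreg
end
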